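/- Let R be a ring, N a left R-module such that N^(ℕ) is pure-injective, and M a pure submodule of N. Then M^(ℕ) is pure-injective. -/

import Mathlib

/-!
Over any ring, a module is pure-injective iff it is algebraically compact: every system of linear
equations with parameters in it, in any number of unknowns, is solvable as soon as each of its
finite subsystems is. The descending chain condition on pp-definable subgroups implies algebraic
compactness, by extending a finitely solvable system one unknown at a time (Zorn); and
conversely, if `N^(ℕ)` is algebraically compact then `N` has that chain condition: for a strictly
descending chain `φₙ(N)` pick `aₙ ∈ φₙ(N) \ φₙ₊₁(N)`; the cosets `(a₀, …, aₙ₋₁, 0, …) + φₙ(N^(ℕ))`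
have the finite intersection property, but a common point `x` would put `-aₘ` into `φₘ₊₁(N)` at
any coordinate `m` outside the support of `x`. The chain condition passes from `N` to a pure
submodule `M`, because `φ(M) = M ∩ φ(N)`, and from `M` to `M^(ℕ)`, because pp-definable subgroups
of a direct sum are computed coordinatewise. Hence `M^(ℕ)` is algebraically compact, that is,
pure-injective.
-/

open Cardinal

universe u v

def IsPureMap (R : Type u) [Ring R] {M N : Type v}
    [AddCommGroup M] [Module R M] [AddCommGroup N] [Module R N]
    (f : M →ₗ[R] N) : Prop :=
  ∀ (m k : ℕ) (a : Fin m → Fin k → R) (b : Fin m → M),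
    (∃ x : Fin k → N, ∀ i, ∑ j, a i j • x j = f (b i)) →
    (∃ x : Fin k → M, ∀ i, ∑ j, a i j • x j = b i)

def PureInjective (R : Type u) [Ring R] (M : Type v) [AddCommGroup M] [Module R M] : Prop :=
  ∀ (N : Type v) [AddCommGroup N] [Module R N], ∀ f : M →ₗ[R] N,
    Function.Injective f → IsPureMap R f → ∃ g : N →ₗ[R] M, g ∘ₗ f = LinearMap.id

open Finsupp

theorem linearCombination_fun_add {R V X : Type*} [Semiring R] [AddCommMonoid X] [Module R X]
    (y y' : V → X) :
    linearCombination R (y + y') = linearCombination R y + linearCombination R y' :=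
  map_add (bilinearCombination R ℕ) y y'

theorem linearCombination_fun_sub {R V X : Type*} [Ring R] [AddCommGroup X] [Module R X]
    (y y' : V → X) :
    linearCombination R (y - y') = linearCombination R y - linearCombination R y' :=
  map_sub (bilinearCombination R ℤ) y y'

/-- A primitive positive formula in one free variable: the existential closure, over all
variables but `free`, of the finite homogeneous linear system `eqns` in the variables `Var`. -/
structure PPFormula (R : Type u) [Ring R] where
  Var : Type u
  eqns : Set (Var →₀ R)
  finite_eqns : eqns.Finite
  free : Var

namespace PPFormula

variable {R : Type u} [Ring R] (φ ψ : PPFormula R)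
variable {X : Type v} [AddCommGroup X] [Module R X] {Y : Type*} [AddCommGroup Y] [Module R Y]

def sol (X : Type v) [AddCommGroup X] [Module R X] : AddSubgroup X where
  carrier := {x | ∃ y : φ.Var → X, y φ.free = x ∧ ∀ w ∈ φ.eqns, linearCombination R y w = 0}
  zero_mem' := ⟨0, rfl, by simp⟩
  add_mem' := by
    rintro _ _ ⟨y, rfl, hy⟩ ⟨y', rfl, hy'⟩
    exact ⟨y + y', rfl, fun w hw => by
      rw [linearCombination_fun_add, LinearMap.add_apply, hy w hw, hy' w hw, add_zero]⟩
  neg_mem' := by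
    rintro _ ⟨y, rfl, hy⟩
    exact ⟨-y, rfl, fun w hw => by
      rw [← zero_sub, linearCombination_fun_sub, LinearMap.sub_apply, hy w hw,
        linearCombination_zero_apply, sub_zero]⟩

theorem mem_sol {x : X} :
    x ∈ φ.sol X ↔ ∃ y : φ.Var → X, y φ.free = x ∧ ∀ w ∈ φ.eqns, linearCombination R y w = 0 :=
  Iff.rfl

variable {φ} in
theorem map_mem_sol (g : X →ₗ[R] Y) {x : X} (hx : x ∈ φ.sol X) : g x ∈ φ.sol Y := by
  obtain ⟨y, rfl, hy⟩ := hx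
  exact ⟨g ∘ y, rfl, fun w hw => by rw [← apply_linearCombination, hy w hw, map_zero]⟩

theorem mem_sol_finsupp_iff {ι : Type*} (z : ι →₀ X) :
    z ∈ φ.sol (ι →₀ X) ↔ ∀ i, z i ∈ φ.sol X := by
  refine ⟨fun hz i => map_mem_sol (lapply i) hz, fun hz => ?_⟩
  rw [← z.sum_single]
  exact sum_mem fun i _ => map_mem_sol (lsingle i) (hz i)

def conj : PPFormula R where
  Var := φ.Var ⊕ ψ.Var
  eqns := insert (single (.inl φ.free) 1 - single (.inr ψ.free) 1)
    (mapDomain Sum.inl '' φ.eqns ∪ mapDomain Sum.inr '' ψ.eqns)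
  finite_eqns := ((φ.finite_eqns.image _).union (ψ.finite_eqns.image _)).insert _
  free := .inl φ.free

theorem sol_conj : (φ.conj ψ).sol X = φ.sol X ⊓ ψ.sol X := by
  ext x
  simp only [mem_sol, conj, AddSubgroup.mem_inf,
    Set.forall_mem_insert, Set.mem_union, or_imp, forall_and, Set.forall_mem_image,
    linearCombination_mapDomain, map_sub, linearCombination_single, one_smul, sub_eq_zero]
  constructor
  · rintro ⟨y, rfl, hfree, hφ, hψ⟩
    exact ⟨⟨y ∘ .inl, rfl, hφ⟩, ⟨y ∘ .inr, hfree.symm, hψ⟩⟩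
  · rintro ⟨⟨y, rfl, hφ⟩, ⟨y', hy', hψ⟩⟩
    exact ⟨Sum.elim y y', rfl, hy'.symm, hφ, hψ⟩

end PPFormula

section Systems

variable {R : Type u} [Ring R] {V : Type*} {X : Type*} [AddCommGroup X] [Module R X]

/-- `y` solves the linear system `S`, each `e ∈ S` standing for the equation
`∑ v, e.1 v • y v = e.2`. -/
def IsSolution (S : Set ((V →₀ R) × X)) (y : V → X) : Prop :=
  ∀ e ∈ S, linearCombination R y e.1 = e.2

def FinitelySolvable (S : Set ((V →₀ R) × X)) : Prop :=
  ∀ T ⊆ S, T.Finite → ∃ y, IsSolution T y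

variable (R) in
def IsAlgebraicallyCompact (X : Type u) [AddCommGroup X] [Module R X] : Prop :=
  ∀ (V : Type u) (S : Set ((V →₀ R) × X)), FinitelySolvable S → ∃ y, IsSolution S y

theorem IsSolution.mono {S T : Set ((V →₀ R) × X)} {y : V → X} (hy : IsSolution S y)
    (hTS : T ⊆ S) : IsSolution T y :=
  fun e he => hy e (hTS he)

theorem linearCombination_eq_sum_coe_sort {s : Finset V} {w : V →₀ R} (hw : w.support ⊆ s)
    (y : V → X) : linearCombination R y w = ∑ v : s, w v • y v := by
  rw [linearCombination_apply_of_mem_supported R (by exact hw), ← Finset.sum_coe_sort s]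

theorem FinitelySolvable.sUnion {C : Set (Set ((V →₀ R) × X))} (hC : IsChain (· ⊆ ·) C)
    (hne : C.Nonempty) (h : ∀ S ∈ C, FinitelySolvable S) : FinitelySolvable (⋃₀ C) :=
  fun T hT hTfin =>
    let ⟨S, hSC, hTS⟩ := hC.directedOn.exists_mem_subset_of_finite_of_subset_sUnion hne hTfin hT
    h S hSC T hTS hTfin

theorem FinitelySolvable.isSolution_of_forall_single_mem {S : Set ((V →₀ R) × X)}
    (hS : FinitelySolvable S) {y : V → X} (hy : ∀ v, (single v 1, y v) ∈ S) :
    IsSolution S y := by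
  intro e he
  obtain ⟨y', hy'⟩ := hS (insert e ((fun v => (single v 1, y v)) '' e.1.support))
    (Set.insert_subset he (Set.image_subset_iff.mpr fun v _ => hy v))
    ((e.1.support.finite_toSet.image _).insert e)
  have hagree : ∀ v ∈ e.1.support, y' v = y v := fun v hv => by
    simpa [linearCombination_single] using hy' _ (Set.mem_insert_of_mem _ ⟨v, hv, rfl⟩)
  rw [← hy' e (Set.mem_insert _ _), linearCombination_apply, linearCombination_apply]
  exact Finsupp.sum_congr fun v hv => by rw [hagree v hv]

end Systems

section Purity

variable {R : Type u} [Ring R] {M N : Type v} [AddCommGroup M] [Module R M]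
  [AddCommGroup N] [Module R N] {f : M →ₗ[R] N}

theorem IsPureMap.exists_fintype_solution (hf : IsPureMap R f) {ι κ : Type*} [Fintype ι]
    [Fintype κ] (a : ι → κ → R) (b : ι → M) (h : ∃ x : κ → N, ∀ i, ∑ j, a i j • x j = f (b i)) :
    ∃ x : κ → M, ∀ i, ∑ j, a i j • x j = b i := by
  obtain ⟨x, hx⟩ := h
  let eι := Fintype.equivFin ι
  let eκ := Fintype.equivFin κ
  obtain ⟨x', hx'⟩ := hf _ _ (fun i j => a (eι.symm i) (eκ.symm j)) (b ∘ eι.symm)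
    ⟨x ∘ eκ.symm, fun i => (Equiv.sum_comp eκ.symm fun j => a (eι.symm i) j • x j).trans (hx _)⟩
  refine ⟨x' ∘ eκ, fun i => ?_⟩
  rw [← Equiv.sum_comp eκ.symm]
  simpa [eι] using hx' (eι i)

theorem IsPureMap.exists_solution (hf : IsPureMap R f) {V : Type*} {S : Set ((V →₀ R) × M)}
    (hS : S.Finite) (x : V → N) (hx : ∀ e ∈ S, linearCombination R x e.1 = f e.2) :
    ∃ y, IsSolution S y := by
  classical
  have := hS.fintype
  let T : Finset V := hS.toFinset.biUnion fun e => e.1.support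
  have hT : ∀ e ∈ S, e.1.support ⊆ T := fun e he v hv =>
    Finset.mem_biUnion.mpr ⟨e, hS.mem_toFinset.mpr he, hv⟩
  obtain ⟨x', hx'⟩ := hf.exists_fintype_solution (fun (e : S) (v : T) => e.1.1 v) (fun e => e.1.2)
    ⟨fun v => x v, fun e => by rw [← linearCombination_eq_sum_coe_sort (hT e e.2), hx e e.2]⟩
  refine ⟨fun v => if h : v ∈ T then x' ⟨v, h⟩ else 0, fun e he => ?_⟩
  rw [linearCombination_eq_sum_coe_sort (hT e he)]
  simpa using hx' ⟨e, he⟩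

theorem IsPureMap.finitelySolvable (hf : IsPureMap R f) {V : Type*} {S : Set ((V →₀ R) × M)}
    (x : V → N) (hx : ∀ e ∈ S, linearCombination R x e.1 = f e.2) : FinitelySolvable S :=
  fun _ hTS hT => hf.exists_solution hT x fun e he => hx e (hTS he)

theorem IsPureMap.mem_sol_iff (hf : IsPureMap R f) (φ : PPFormula R) {x : M} :
    x ∈ φ.sol M ↔ f x ∈ φ.sol N := by
  refine ⟨φ.map_mem_sol f, fun ⟨y, hy, hφ⟩ => ?_⟩
  obtain ⟨y', hy'⟩ := hf.exists_solution
    ((φ.finite_eqns.image fun w => (w, (0 : M))).insert (single φ.free 1, x)) y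
    (by simpa [hy] using hφ)
  simp only [IsSolution, Set.forall_mem_insert, Set.forall_mem_image, linearCombination_single,
    one_smul] at hy'
  exact ⟨y', hy'⟩

end Purity

section PPDescendingChainCondition

variable {R : Type u} [Ring R]

variable (R) in
def PPDescendingChainCondition (X : Type v) [AddCommGroup X] [Module R X] : Prop :=
  WellFounded fun φ ψ : PPFormula R => φ.sol X < ψ.sol X

variable {X : Type v} [AddCommGroup X] [Module R X]

theorem PPDescendingChainCondition.finsupp (hX : PPDescendingChainCondition R X) (ι : Type*) :
    PPDescendingChainCondition R (ι →₀ X) := by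
  refine Subrelation.wf (fun {φ ψ} hlt => ?_) hX
  obtain ⟨z, hzψ, hzφ⟩ := SetLike.exists_of_lt hlt
  rw [PPFormula.mem_sol_finsupp_iff] at hzψ hzφ
  obtain ⟨i, hi⟩ := not_forall.mp hzφ
  refine SetLike.lt_iff_le_and_exists.mpr ⟨fun x hx => ?_, z i, hzψ i, hi⟩
  simpa using PPFormula.map_mem_sol (lapply i) (hlt.le (PPFormula.map_mem_sol (lsingle i) hx))

theorem PPDescendingChainCondition.of_isPureMap {M N : Type v} [AddCommGroup M] [Module R M]
    [AddCommGroup N] [Module R N] {f : M →ₗ[R] N} (hf : IsPureMap R f)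
    (hN : PPDescendingChainCondition R N) : PPDescendingChainCondition R M := by
  refine WellFounded.wellFounded_iff_has_min.mpr fun F ⟨φ, hφ⟩ => ?_
  -- minimise the `N`-solutions among all formulas defining the same subgroup of `M` as one in `F`
  obtain ⟨χ, ⟨φ₀, hφ₀, hχ⟩, hmin⟩ := hN.has_min {χ | ∃ φ ∈ F, χ.sol M = φ.sol M} ⟨φ, φ, hφ, rfl⟩
  refine ⟨φ₀, hφ₀, fun ψ hψ hlt => ?_⟩
  have hconj : (χ.conj ψ).sol M = ψ.sol M := by
    rw [PPFormula.sol_conj, hχ, inf_eq_right.mpr hlt.le]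
  have hconjN : (χ.conj ψ).sol N = χ.sol N :=
    eq_of_le_of_not_lt (by rw [PPFormula.sol_conj]; exact inf_le_left) (hmin _ ⟨ψ, hψ, hconj⟩)
  refine hlt.ne ?_
  rw [← hconj, ← hχ]
  ext x
  rw [hf.mem_sol_iff, hf.mem_sol_iff, hconjN]

end PPDescendingChainCondition

section PureInjective

variable {R : Type u} [Ring R] {V X : Type u} [AddCommGroup X] [Module R X]
  {S : Set ((V →₀ R) × X)}

noncomputable def residualMap (y : V → X) : (V →₀ R) × X →ₗ[R] X :=
  (linearCombination R y).coprod (-LinearMap.id)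

theorem residualMap_apply (y : V → X) (e : (V →₀ R) × X) :
    residualMap y e = linearCombination R y e.1 - e.2 := by
  simp [residualMap, sub_eq_add_neg]

theorem IsSolution.span_le_ker_residualMap {y : V → X} (hy : IsSolution S y) :
    Submodule.span R S ≤ LinearMap.ker (residualMap y) :=
  Submodule.span_le.mpr fun e he => by simp [residualMap_apply, hy e he]

theorem FinitelySolvable.exists_residualMap_eq_zero (hS : FinitelySolvable S)
    {T : Finset ((V →₀ R) × X)} (hT : (T : Set ((V →₀ R) × X)) ⊆ Submodule.span R S) :
    ∃ y : V → X, ∀ k ∈ T, residualMap y k = 0 := by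
  obtain ⟨T', hT'S, hTT'⟩ := Submodule.subset_span_finite_of_subset_span hT
  obtain ⟨y, hy⟩ := hS _ hT'S T'.finite_toSet
  exact ⟨y, fun k hk => hy.span_le_ker_residualMap (hTT' hk)⟩

variable (S) in
/-- The module generated by `X` and a solution of `S`. -/
abbrev SystemModule := ((V →₀ R) × X) ⧸ Submodule.span R S

variable (S) in
/-- The sign makes the classes of `(single v 1, 0)` a solution of `S`. -/
noncomputable def paramMap : X →ₗ[R] SystemModule S :=
  -((Submodule.span R S).mkQ ∘ₗ LinearMap.inr R (V →₀ R) X)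

theorem paramMap_apply (x : X) :
    paramMap S x = -Submodule.Quotient.mk ((0 : V →₀ R), x) :=
  rfl

theorem FinitelySolvable.injective_paramMap (hS : FinitelySolvable S) :
    Function.Injective (paramMap S) := by
  rw [injective_iff_map_eq_zero]
  intro x hx
  rw [paramMap_apply, neg_eq_zero, Submodule.Quotient.mk_eq_zero] at hx
  obtain ⟨y, hy⟩ := hS.exists_residualMap_eq_zero (T := {(0, x)}) (by simpa using hx)
  simpa [residualMap_apply] using hy _ (Finset.mem_singleton_self _)

theorem FinitelySolvable.isPureMap_paramMap (hS : FinitelySolvable S) :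
    IsPureMap R (paramMap S) := by
  classical
  rintro m k a b ⟨x, hx⟩
  choose u hu using fun j => Submodule.mkQ_surjective _ (x j)
  have hmem : ∀ i, ∑ j, a i j • u j + ((0 : V →₀ R), b i) ∈ Submodule.span R S := fun i => by
    rw [← Submodule.Quotient.mk_eq_zero, Submodule.Quotient.mk_add, ← eq_neg_iff_add_eq_zero,
      ← paramMap_apply, ← hx i, ← Submodule.mkQ_apply, map_sum]
    simp only [map_smul, hu]
  obtain ⟨y, hy⟩ := hS.exists_residualMap_eq_zero
    (T := Finset.univ.image fun i => ∑ j, a i j • u j + ((0 : V →₀ R), b i))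
    (by simpa [Set.range_subset_iff] using hmem)
  refine ⟨fun j => residualMap y (u j), fun i => ?_⟩
  have := hy _ (Finset.mem_image_of_mem _ (Finset.mem_univ i))
  rw [map_add, map_sum, residualMap_apply] at this
  simpa [add_neg_eq_zero] using this

theorem isSolution_of_comp_paramMap_eq_id (g : SystemModule S →ₗ[R] X)
    (hg : g ∘ₗ paramMap S = LinearMap.id) :
    IsSolution S fun v => g (Submodule.Quotient.mk (single v 1, 0)) := by
  intro e he
  let L := g ∘ₗ (Submodule.span R S).mkQ ∘ₗ LinearMap.inl R (V →₀ R) X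
  have hL : linearCombination R (fun v => L (single v 1)) = L :=
    lhom_ext fun v r => by simp [← map_smul]
  have hmk : Submodule.Quotient.mk (p := Submodule.span R S) (e.1, 0) = paramMap S e.2 := by
    rw [paramMap_apply, eq_neg_iff_add_eq_zero, ← Submodule.Quotient.mk_add,
      Submodule.Quotient.mk_eq_zero]
    simpa using Submodule.subset_span he
  calc linearCombination R (fun v => g (Submodule.Quotient.mk (single v 1, 0))) e.1
      = L e.1 := congr($hL e.1)
    _ = e.2 := by simp [L, hmk, ← LinearMap.comp_apply, hg]

theorem PureInjective.isAlgebraicallyCompact (hX : PureInjective R X) :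
    IsAlgebraicallyCompact R X := fun _ _ hS =>
  let ⟨g, hg⟩ := hX _ _ hS.injective_paramMap hS.isPureMap_paramMap
  ⟨_, isSolution_of_comp_paramMap_eq_id g hg⟩

theorem IsAlgebraicallyCompact.pureInjective (hX : IsAlgebraicallyCompact R X) :
    PureInjective R X := by
  intro P _ _ h _ hh
  -- a solution `y : P → X` is an `R`-linear retraction of `h`, and `id` solves it in `P`
  let eqn : (P × P) ⊕ (R × P) ⊕ X → (P →₀ R) × X
    | .inl (p, p') => (single p 1 + single p' 1 - single (p + p') 1, 0)
    | .inr (.inl (r, p)) => (single p r - single (r • p) 1, 0)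
    | .inr (.inr x) => (single (h x) 1, x)
  have hS : ∀ y : P → X, IsSolution (Set.range eqn) y ↔
      (∀ p p', y p + y p' - y (p + p') = 0) ∧ (∀ (r : R) p, r • y p - y (r • p) = 0) ∧
        ∀ x, y (h x) = x := by
    simp only [IsSolution, Set.forall_mem_range, Sum.forall, Prod.forall]
    simp [eqn, linearCombination_single]
  have hid : ∀ i, linearCombination R id (eqn i).1 = h (eqn i).2 := by
    simp only [Sum.forall, Prod.forall]
    simp [eqn, linearCombination_single]
  obtain ⟨y, hy⟩ := hX P _ (hh.finitelySolvable id (Set.forall_mem_range.mpr hid))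
  obtain ⟨hadd, hsmul, hretr⟩ := (hS y).mp hy
  exact ⟨⟨⟨y, fun p p' => (sub_eq_zero.mp (hadd p p')).symm⟩,
    fun r p => (sub_eq_zero.mp (hsmul r p)).symm⟩, LinearMap.ext hretr⟩

end PureInjective

section ChainConditionImpliesCompactness

variable {R : Type u} [Ring R] {X : Type v} [AddCommGroup X] [Module R X] {V : Type u}
  {S : Set ((V →₀ R) × X)}

variable (S) in
def PPFormula.ofSystem (hS : S.Finite) (v : V) : PPFormula R :=
  ⟨V, Prod.fst '' S, hS.image _, v⟩

theorem PPFormula.mem_sol_ofSystem (hS : S.Finite) (v : V) {x : X} :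
    x ∈ (ofSystem S hS v).sol X ↔
      ∃ y : V → X, y v = x ∧ ∀ e ∈ S, linearCombination R y e.1 = 0 := by
  simp only [mem_sol, ofSystem, Set.forall_mem_image]

theorem PPFormula.sol_ofSystem_anti {T : Set ((V →₀ R) × X)} (hS : S.Finite) (hT : T.Finite)
    (hST : S ⊆ T) (v : V) : (ofSystem T hT v).sol X ≤ (ofSystem S hS v).sol X := by
  intro x hx
  obtain ⟨y, hyv, hy⟩ := (mem_sol_ofSystem hT v).mp hx
  exact (mem_sol_ofSystem hS v).mpr ⟨y, hyv, fun e he => hy e (hST he)⟩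

theorem IsSolution.sub_mem_sol_ofSystem {y y' : V → X} (hy : IsSolution S y)
    (hy' : IsSolution S y') (hS : S.Finite) (v : V) :
    y v - y' v ∈ (PPFormula.ofSystem S hS v).sol X :=
  (PPFormula.mem_sol_ofSystem hS v).mpr
    ⟨y - y', rfl, fun e he => by rw [linearCombination_fun_sub, LinearMap.sub_apply, hy e he,
      hy' e he, sub_self]⟩

theorem IsSolution.exists_add_of_mem_sol_ofSystem {y : V → X} (hy : IsSolution S y)
    {hS : S.Finite} {v : V} {x : X} (hx : x ∈ (PPFormula.ofSystem S hS v).sol X) :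
    ∃ y', IsSolution S y' ∧ y' v = y v + x := by
  obtain ⟨z, rfl, hz⟩ := (PPFormula.mem_sol_ofSystem hS v).mp hx
  exact ⟨y + z, fun e he => by
    rw [linearCombination_fun_add, LinearMap.add_apply, hy e he, hz e he, add_zero], rfl⟩

theorem PPDescendingChainCondition.exists_finitelySolvable_insert
    (hX : PPDescendingChainCondition R X) (hS : FinitelySolvable S) (v : V) :
    ∃ x : X, FinitelySolvable (insert (single v 1, x) S) := by
  obtain ⟨⟨T₀, hT₀S, hT₀⟩, -, hmin⟩ :=
    (InvImage.wf (fun T : {T // T ⊆ S ∧ T.Finite} => PPFormula.ofSystem T.1 T.2.2 v) hX).has_min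
      Set.univ ⟨⟨∅, Set.empty_subset _, Set.finite_empty⟩, trivial⟩
  obtain ⟨y₀, hy₀⟩ := hS T₀ hT₀S hT₀
  -- the value at `v` of a solution of `T₀` extends to every finite subsystem containing `T₀`
  refine ⟨y₀ v, fun T hT hTfin => ?_⟩
  let T' := T \ {(single v 1, y₀ v)} ∪ T₀
  have hT'S : T' ⊆ S := Set.union_subset (Set.sdiff_singleton_subset_iff.mpr hT) hT₀S
  have hT' : T'.Finite := hTfin.sdiff.union hT₀
  obtain ⟨y₁, hy₁⟩ := hS T' hT'S hT'
  have hsol : (PPFormula.ofSystem T' hT' v).sol X = (PPFormula.ofSystem T₀ hT₀ v).sol X :=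
    eq_of_le_of_not_lt (PPFormula.sol_ofSystem_anti hT₀ hT' Set.subset_union_right v)
      (hmin ⟨T', hT'S, hT'⟩ trivial)
  obtain ⟨y, hy, hyv⟩ := hy₁.exists_add_of_mem_sol_ofSystem
    (hsol ▸ hy₀.sub_mem_sol_ofSystem (hy₁.mono Set.subset_union_right) hT₀ v)
  rw [add_sub_cancel] at hyv
  refine ⟨y, fun e he => ?_⟩
  by_cases h : e = (single v 1, y₀ v)
  · simp [h, linearCombination_single, hyv]
  · exact hy e (Or.inl ⟨he, h⟩)

end ChainConditionImpliesCompactness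

theorem PPDescendingChainCondition.isAlgebraicallyCompact {R : Type u} [Ring R] {X : Type u}
    [AddCommGroup X] [Module R X] (hX : PPDescendingChainCondition R X) :
    IsAlgebraicallyCompact R X := by
  intro V S hS
  obtain ⟨Z, hSZ, hZ⟩ := zorn_subset_nonempty {Z | FinitelySolvable Z}
    (fun C hC hCchain hCne => ⟨⋃₀ C, FinitelySolvable.sUnion hCchain hCne hC,
      fun _ => Set.subset_sUnion_of_mem⟩) S hS
  have hvalue : ∀ v, ∃ x, (single v 1, x) ∈ Z := fun v =>
    let ⟨x, hx⟩ := hX.exists_finitelySolvable_insert hZ.1 v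
    ⟨x, hZ.mem_of_prop_insert hx⟩
  choose y hy using hvalue
  exact ⟨y, (hZ.1.isSolution_of_forall_single_mem hy).mono hSZ⟩

section CompactnessImpliesChainCondition

variable {R : Type u} [Ring R] {X : Type u} [AddCommGroup X] [Module R X]

def PPFormula.cosetSystem (φ : PPFormula R) {V : Type*} (g : φ.Var → V) (v : V) (b : X) :
    Set ((V →₀ R) × X) :=
  insert (single (g φ.free) 1 - single v 1, -b) ((fun w => (mapDomain g w, 0)) '' φ.eqns)

theorem PPFormula.isSolution_cosetSystem_iff (φ : PPFormula R) {V : Type*} (g : φ.Var → V)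
    (v : V) (b : X) (y : V → X) :
    IsSolution (φ.cosetSystem g v b) y ↔
      (y ∘ g) φ.free = y v - b ∧ ∀ w ∈ φ.eqns, linearCombination R (y ∘ g) w = 0 := by
  simp [IsSolution, cosetSystem, linearCombination_mapDomain, linearCombination_single,
    sub_eq_iff_eq_add, neg_add_eq_sub]

theorem IsAlgebraicallyCompact.exists_forall_sub_mem_sol (hX : IsAlgebraicallyCompact R X)
    {ι : Type} (φ : ι → PPFormula R) (b : ι → X)
    (h : ∀ s : Finset ι, ∃ x, ∀ i ∈ s, x - b i ∈ (φ i).sol X) :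
    ∃ x, ∀ i, x - b i ∈ (φ i).sol X := by
  let g (i : ι) (u : (φ i).Var) : Option (Σ i, (φ i).Var) := some ⟨i, u⟩
  let S i := (φ i).cosetSystem (g i) none (b i)
  have hS : FinitelySolvable (⋃ i, S i) := by
    intro T hTS hT
    obtain ⟨I, hI, hTI⟩ := Set.finite_subset_iUnion hT hTS
    obtain ⟨x, hx⟩ := h hI.toFinset
    choose! z hz using fun i (hi : i ∈ I) => (φ i).mem_sol.mp (hx i (hI.mem_toFinset.mpr hi))
    let y (o : Option (Σ i, (φ i).Var)) : X := o.elim x fun p => z p.1 p.2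
    refine ⟨y, fun e he => ?_⟩
    obtain ⟨i, hi, he⟩ := Set.mem_iUnion₂.mp (hTI he)
    exact ((φ i).isSolution_cosetSystem_iff (g i) none (b i) y).mpr (hz i hi) e he
  obtain ⟨y, hy⟩ := hX _ _ hS
  refine ⟨y none, fun i => ?_⟩
  obtain ⟨hfree, heqns⟩ :=
    ((φ i).isSolution_cosetSystem_iff _ _ _ _).mp (hy.mono (Set.subset_iUnion S i))
  exact ⟨_, hfree, heqns⟩

theorem IsAlgebraicallyCompact.ppDescendingChainCondition_of_finsupp
    (hX : IsAlgebraicallyCompact R (ℕ →₀ X)) : PPDescendingChainCondition R X := by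
  refine wellFounded_iff_isEmpty_descending_chain.mpr ⟨fun ⟨φ, hφ⟩ => ?_⟩
  have hanti : Antitone fun n => (φ n).sol X := antitone_nat_of_succ_le fun n => (hφ n).le
  choose a ha hna using fun n => SetLike.exists_of_lt (hφ n)
  let s (n : ℕ) : ℕ →₀ X := ∑ k ∈ Finset.range n, single k (a k)
  have hs : ∀ {n n'}, n ≤ n' → s n' - s n ∈ (φ n).sol (ℕ →₀ X) := fun {n n'} hnn' => by
    rw [← Finset.sum_Ico_eq_sub _ hnn']
    exact sum_mem fun k hk =>
      PPFormula.map_mem_sol (lsingle k) (hanti (Finset.mem_Ico.mp hk).1 (ha k))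
  obtain ⟨x, hx⟩ := hX.exists_forall_sub_mem_sol φ s fun t =>
    ⟨s (t.sup id), fun n hn => hs (Finset.le_sup (f := id) hn)⟩
  -- beyond the support of `x`, the coset condition forces `a m ∈ (φ (m + 1)).sol X`
  obtain ⟨m, hm⟩ := Infinite.exists_notMem_finset x.support
  have hxm := PPFormula.map_mem_sol (lapply m) (hx (m + 1))
  simp [s, Finsupp.notMem_support_iff.mp hm, single_apply] at hxm
  exact hna m hxm

end CompactnessImpliesChainCondition

theorem sigmaPureInjective_of_pure_submodule_general (R : Type u) [Ring R]
    (M N : Type u) [AddCommGroup M] [Module R M] [AddCommGroup N] [Module R N]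
    (f : M →ₗ[R] N) (hpure : IsPureMap R f)
    (hN : PureInjective R (ℕ →₀ N)) :
    PureInjective R (ℕ →₀ M) :=
  have hdccN : PPDescendingChainCondition R N :=
    hN.isAlgebraicallyCompact.ppDescendingChainCondition_of_finsupp
  have hdccM : PPDescendingChainCondition R M := hdccN.of_isPureMap hpure
  (hdccM.finsupp ℕ).isAlgebraicallyCompact.pureInjective

/-- If `N^(ℕ)` is pure-injective and `M` is a pure submodule of `N`, then `M^(ℕ)`
is pure-injective. -/
theorem sigmaPureInjective_of_pure_submodule (R : Type u) [Ring R]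
    (M N : Type u) [AddCommGroup M] [Module R M] [AddCommGroup N] [Module R N]
    (f : M →ₗ[R] N) (hf : Function.Injective f) (hpure : IsPureMap R f)
    (hN : PureInjective R (ℕ →₀ N)) :
    PureInjective R (ℕ →₀ M) :=
  sigmaPureInjective_of_pure_submodule_general R M N f hpure hN
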